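/- arXiv:1607.08875 — 3 statements merged into one kernel-verified Lean document; each statement's English description precedes it below -/
import Mathlib

section
/- Let E ∈ C³(ℝ^N) and let x ∈ C¹([0,T]; ℝ^N) be a solution of the ISD on [0,T] along which λ1(x(t)) < λ2(x(t)). Then for all 0 < t < T, d/dt ‖∇E(x(t))‖² = −2 ⟨∇E(x(t)), ∇²E(x(t)) (I − 2 v1(x(t)) ⊗ v1(x(t))) ∇E(x(t))⟩ ≤ −2 min(−λ1(x(t)), λ2(x(t))) ‖∇E(x(t))‖². -/
open Real Filter Set
open scoped Topology RealInnerProductSpace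

noncomputable section
abbrev Vec (N : ℕ) := EuclideanSpace ℝ (Fin N)

noncomputable def hessCLM {N : ℕ} (E : Vec N → ℝ) (x : Vec N) : Vec N →L[ℝ] Vec N :=
  fderiv ℝ (gradient E) x

noncomputable def hessOp {N : ℕ} (E : Vec N → ℝ) (x : Vec N) : Module.End ℝ (Vec N) :=
  (hessCLM E x).toLinearMap

def IsMinEigen {N : ℕ} (T : Module.End ℝ (Vec N)) (lam : ℝ) : Prop :=
  T.HasEigenvalue lam ∧ ∀ μ : ℝ, T.HasEigenvalue μ → lam ≤ μ

def IsMinEigvec {N : ℕ} (T : Module.End ℝ (Vec N)) (w : Vec N) : Prop :=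
  ‖w‖ = 1 ∧ ∃ lam : ℝ, IsMinEigen T lam ∧ T w = lam • w

def TwoSmallestEigen {N : ℕ} (T : Module.End ℝ (Vec N)) (lam1 lam2 : ℝ) : Prop :=
  T.HasEigenvalue lam1 ∧ T.HasEigenvalue lam2 ∧ lam1 ≤ lam2 ∧
    (∀ μ : ℝ, T.HasEigenvalue μ → lam1 ≤ μ) ∧
    (∀ μ : ℝ, T.HasEigenvalue μ → μ = lam1 ∨ lam2 ≤ μ) ∧
    (lam1 < lam2 → Module.finrank ℝ (T.eigenspace lam1) = 1)

/-- the reflection `(I - 2 w ⊗ w) u`. -/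
def reflect {N : ℕ} (w u : Vec N) : Vec N := u - (2 * ⟪w, u⟫) • w

/-- ISD vector field with eigendirection `w`. -/
noncomputable def isdField {N : ℕ} (E : Vec N → ℝ) (x w : Vec N) : Vec N :=
  -(reflect w (gradient E x))

def IsISDSolOn {N : ℕ} (E : Vec N → ℝ) (x : ℝ → Vec N) (s : Set ℝ) : Prop :=
  ∀ t ∈ s, ∃ w : Vec N, IsMinEigvec (hessOp E (x t)) w ∧
    HasDerivAt x (isdField E (x t) w) t

noncomputable def gadVField {N : ℕ} (E : Vec N → ℝ) (x v : Vec N) : Vec N :=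
  -(hessCLM E x v) + ⟪v, hessCLM E x v⟫ • v

def IsGADSolOn {N : ℕ} (E : Vec N → ℝ) (ε : ℝ) (x v : ℝ → Vec N) (s : Set ℝ) : Prop :=
  ∀ t ∈ s, ‖v t‖ = 1 ∧ HasDerivAt x (-(reflect (v t) (gradient E (x t)))) t ∧
    HasDerivAt v ((ε ^ 2)⁻¹ • gadVField E (x t) (v t)) t

def IsIndexOneSaddle {N : ℕ} (E : Vec N → ℝ) (x : Vec N) : Prop :=
  gradient E x = 0 ∧ ∃ lam1 lam2 : ℝ,
    TwoSmallestEigen (hessOp E x) lam1 lam2 ∧ lam1 < 0 ∧ 0 < lam2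

end

section Aux

open InnerProductSpace in
lemma gradient_contDiff' {N : ℕ} {E : Vec N → ℝ} (hE : ContDiff ℝ 3 E) :
    ContDiff ℝ 2 (gradient E) := by
  have h1 : ContDiff ℝ 2 (fderiv ℝ E) := hE.fderiv_right (by norm_num)
  have h : gradient E = fun y => (toDual ℝ (Vec N)).symm (fderiv ℝ E y) := rfl
  rw [h]
  exact (toDual ℝ (Vec N)).symm.toContinuousLinearEquiv.contDiff.comp h1

lemma hasFDerivAt_gradient' {N : ℕ} {E : Vec N → ℝ} (hE : ContDiff ℝ 3 E) (x : Vec N) :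
    HasFDerivAt (gradient E) (hessCLM E x) x :=
  (((gradient_contDiff' hE).differentiable (by norm_num)) x).hasFDerivAt

lemma hessCLM_inner_eq' {N : ℕ} {E : Vec N → ℝ} (hE : ContDiff ℝ 3 E) (x u v : Vec N) :
    ⟪hessCLM E x u, v⟫ = fderiv ℝ (fderiv ℝ E) x u v := by
  have hfd : HasFDerivAt (fderiv ℝ E) (fderiv ℝ (fderiv ℝ E) x) x :=
    (((hE.fderiv_right (m := 2) (by norm_num)).differentiable (by norm_num)) x).hasFDerivAt
  have hA : HasFDerivAt (fun y => ⟪gradient E y, v⟫)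
      (((innerSL ℝ).flip v).comp (hessCLM E x)) x :=
    (((innerSL ℝ).flip v).hasFDerivAt).comp x (hasFDerivAt_gradient' hE x)
  have hB : HasFDerivAt (fun y => fderiv ℝ E y v)
      ((ContinuousLinearMap.apply ℝ ℝ v).comp (fderiv ℝ (fderiv ℝ E) x)) x :=
    ((ContinuousLinearMap.apply ℝ ℝ v).hasFDerivAt).comp x hfd
  have hfun : (fun y => ⟪gradient E y, v⟫) = fun y => fderiv ℝ E y v := by
    funext y
    exact InnerProductSpace.toDual_symm_apply
  rw [hfun] at hA
  have h2 := congrArg (fun L => L u) (hA.unique hB)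
  simp only [ContinuousLinearMap.comp_apply, ContinuousLinearMap.flip_apply, innerSL_apply_apply,
    ContinuousLinearMap.apply_apply] at h2
  exact h2

lemma hess_symm' {N : ℕ} {E : Vec N → ℝ} (hE : ContDiff ℝ 3 E) (x u v : Vec N) :
    ⟪hessCLM E x u, v⟫ = ⟪u, hessCLM E x v⟫ := by
  rw [hessCLM_inner_eq' hE, real_inner_comm, hessCLM_inner_eq' hE]
  exact (hE.contDiffAt.isSymmSndFDerivAt (by norm_num)) u v

lemma hessOp_symm' {N : ℕ} {E : Vec N → ℝ} (hE : ContDiff ℝ 3 E) (x : Vec N) :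
    (hessOp E x).IsSymmetric := fun u v => hess_symm' hE x u v

lemma quad_lower' {N : ℕ} {T : Module.End ℝ (Vec N)} (hsymm : T.IsSymmetric)
    {lam1 lam2 : ℝ} (h2 : TwoSmallestEigen T lam1 lam2) (u : Vec N)
    (hu : ∀ z ∈ T.eigenspace lam1, ⟪z, u⟫ = 0) : lam2 * ‖u‖ ^ 2 ≤ ⟪u, T u⟫ := by
  have hn : Module.finrank ℝ (Vec N) = N := finrank_euclideanSpace_fin
  set b := hsymm.eigenvectorBasis hn with hb
  set μ := hsymm.eigenvalues hn with hμ
  have key : ⟪u, T u⟫ = ∑ i, ⟪u, b i⟫ * ⟪b i, T u⟫ := (b.sum_inner_mul_inner u (T u)).symm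
  have hnorm : ⟪u, u⟫ = ∑ i, ⟪u, b i⟫ * ⟪b i, u⟫ := (b.sum_inner_mul_inner u u).symm
  have hterm : ∀ i, lam2 * (⟪u, b i⟫ * ⟪b i, u⟫) ≤ ⟪u, b i⟫ * ⟪b i, T u⟫ := by
    intro i
    have hbi : ⟪b i, T u⟫ = μ i * ⟪b i, u⟫ := by
      rw [← hsymm (b i) u, hsymm.apply_eigenvectorBasis hn i, real_inner_smul_left]
      norm_cast
    rcases h2.2.2.2.2.1 (μ i) (hsymm.hasEigenvalue_eigenvalues hn i) with h | h
    · have hbz : ⟪b i, u⟫ = 0 :=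
        hu (b i) (h ▸ (hsymm.hasEigenvector_eigenvectorBasis hn i).1)
      simp [hbi, hbz]
    · have hc : ⟪u, b i⟫ = ⟪b i, u⟫ := real_inner_comm (b i) u
      rw [hbi, hc]
      nlinarith [mul_self_nonneg ⟪b i, u⟫]
  calc lam2 * ‖u‖ ^ 2 = ∑ i, lam2 * (⟪u, b i⟫ * ⟪b i, u⟫) := by
        rw [← Finset.mul_sum, ← hnorm, real_inner_self_eq_norm_sq]
    _ ≤ ∑ i, ⟪u, b i⟫ * ⟪b i, T u⟫ := Finset.sum_le_sum (fun i _ => hterm i)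
    _ = ⟪u, T u⟫ := key.symm

lemma span_eq_eigenspace' {N : ℕ} (T : Module.End ℝ (Vec N)) {lam1 : ℝ} {w : Vec N}
    (hw : w ∈ T.eigenspace lam1) (hwn : w ≠ 0)
    (hrk : Module.finrank ℝ (T.eigenspace lam1) = 1) :
    (ℝ ∙ w) = T.eigenspace lam1 := by
  apply Submodule.eq_of_le_of_finrank_le
  · rwa [Submodule.span_singleton_le_iff_mem]
  · rw [hrk, finrank_span_singleton hwn]

end Aux

/-- Along an ISD trajectory on `[0,T]` with `λ1 < λ2`, the function
`t ↦ ‖∇E(x(t))‖²` has derivative `-2⟨∇E, ∇²E (I - 2v1⊗v1) ∇E⟩`, which is at most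
`-2 min(-λ1, λ2) ‖∇E‖²`. -/
theorem stmt2 {N : ℕ} (E : Vec N → ℝ) (hE : ContDiff ℝ 3 E) (T : ℝ) (hT : 0 < T)
    (x : ℝ → Vec N) (lam1 lam2 : Vec N → ℝ)
    (heig : ∀ t ∈ Icc (0:ℝ) T,
      TwoSmallestEigen (hessOp E (x t)) (lam1 (x t)) (lam2 (x t)) ∧ lam1 (x t) < lam2 (x t))
    (hsol : IsISDSolOn E x (Icc 0 T)) :
    ∀ t ∈ Ioo (0:ℝ) T, ∀ w : Vec N, IsMinEigvec (hessOp E (x t)) w →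
      HasDerivAt (fun s => ‖gradient E (x s)‖ ^ 2)
        (-2 * ⟪gradient E (x t), hessCLM E (x t) (reflect w (gradient E (x t)))⟫) t ∧
      -2 * ⟪gradient E (x t), hessCLM E (x t) (reflect w (gradient E (x t)))⟫ ≤
        -2 * min (-(lam1 (x t))) (lam2 (x t)) * ‖gradient E (x t)‖ ^ 2 := by
  intro t ht w hw
  have htIcc : t ∈ Icc (0:ℝ) T := Ioo_subset_Icc_self ht
  obtain ⟨h2, hlt⟩ := heig t htIcc
  set g : Vec N := gradient E (x t) with hg_def
  set H : Vec N →L[ℝ] Vec N := hessCLM E (x t) with hH_def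
  have hsymmOp : (hessOp E (x t)).IsSymmetric := hessOp_symm' hE (x t)
  -- w is a unit eigenvector for lam1
  obtain ⟨hw1, lam, ⟨hlamE, hlammin⟩, hTw⟩ := hw
  have hwne : w ≠ 0 := fun h => by simp [h] at hw1
  have hweig : Module.End.HasEigenvalue (hessOp E (x t)) lam :=
    Module.End.hasEigenvalue_of_hasEigenvector ⟨Module.End.mem_eigenspace_iff.2 hTw, hwne⟩
  have hlam : lam = lam1 (x t) :=
    le_antisymm (hlammin _ h2.1) (h2.2.2.2.1 lam hweig)
  have hTw1 : hessOp E (x t) w = lam1 (x t) • w := by rw [hTw, hlam]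
  have hwmem : w ∈ (hessOp E (x t)).eigenspace (lam1 (x t)) :=
    Module.End.mem_eigenspace_iff.2 hTw1
  have hspan : (ℝ ∙ w) = (hessOp E (x t)).eigenspace (lam1 (x t)) :=
    span_eq_eigenspace' _ hwmem hwne (h2.2.2.2.2.2 hlt)
  -- the solution's eigenvector w' satisfies reflect w' g = reflect w g
  obtain ⟨w', ⟨hw'1, lam', ⟨hlamE', hlammin'⟩, hTw'⟩, hderiv⟩ := hsol t htIcc
  have hw'ne : w' ≠ 0 := fun h => by simp [h] at hw'1
  have hw'eig : Module.End.HasEigenvalue (hessOp E (x t)) lam' :=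
    Module.End.hasEigenvalue_of_hasEigenvector ⟨Module.End.mem_eigenspace_iff.2 hTw', hw'ne⟩
  have hlam' : lam' = lam1 (x t) :=
    le_antisymm (hlammin' _ h2.1) (h2.2.2.2.1 lam' hw'eig)
  have hw'mem : w' ∈ (hessOp E (x t)).eigenspace (lam1 (x t)) :=
    Module.End.mem_eigenspace_iff.2 (by rw [hTw', hlam'])
  obtain ⟨c, hc⟩ := Submodule.mem_span_singleton.1 (hspan ▸ hw'mem)
  have hcabs : |c| = 1 := by
    have : ‖w'‖ = |c| * ‖w‖ := by rw [← hc, norm_smul, Real.norm_eq_abs]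
    rw [hw1, hw'1, mul_one] at this
    exact this.symm
  have hrefl : reflect w' g = reflect w g := by
    rcases (abs_eq (by norm_num : (0:ℝ) ≤ 1)).1 hcabs with h1 | h1 <;>
      · rw [← hc, h1]
        simp only [reflect, real_inner_smul_left]
        module
  rw [show isdField E (x t) w' = -(reflect w g) from by rw [isdField, hrefl]] at hderiv
  -- the derivative statement
  have hgradF : HasFDerivAt (gradient E) H (x t) := hasFDerivAt_gradient' hE (x t)
  have hgd : HasDerivAt (fun s => gradient E (x s)) (H (-(reflect w g))) t :=
    hgradF.comp_hasDerivAt t hderiv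
  have hinner : HasDerivAt (fun s => ⟪gradient E (x s), gradient E (x s)⟫)
      (⟪g, H (-(reflect w g))⟫ + ⟪H (-(reflect w g)), g⟫) t :=
    hgd.inner ℝ hgd
  have hfun : (fun s => ⟪gradient E (x s), gradient E (x s)⟫)
      = fun s => ‖gradient E (x s)‖ ^ 2 := by
    funext s; exact real_inner_self_eq_norm_sq _
  rw [hfun] at hinner
  have hval : ⟪g, H (-(reflect w g))⟫ + ⟪H (-(reflect w g)), g⟫
      = -2 * ⟪g, H (reflect w g)⟫ := by
    rw [map_neg, inner_neg_right, inner_neg_left, real_inner_comm (H (reflect w g)) g]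
    ring
  rw [hval] at hinner
  refine ⟨hinner, ?_⟩
  -- the inequality
  set a : ℝ := ⟪w, g⟫ with ha_def
  set u : Vec N := g - a • w with hu_def
  have hww : ⟪w, w⟫ = 1 := by rw [real_inner_self_eq_norm_sq, hw1]; norm_num
  have hwu : ⟪w, u⟫ = 0 := by
    rw [hu_def, inner_sub_right, real_inner_smul_right, hww]; ring
  have huw : ⟪u, w⟫ = 0 := by rw [real_inner_comm]; exact hwu
  have hu_perp : ∀ z ∈ (hessOp E (x t)).eigenspace (lam1 (x t)), ⟪z, u⟫ = 0 := by
    intro z hz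
    obtain ⟨d, hd⟩ := Submodule.mem_span_singleton.1 (hspan.symm ▸ hz)
    rw [← hd, real_inner_smul_left, hwu, mul_zero]
  have hquad : lam2 (x t) * ‖u‖ ^ 2 ≤ ⟪u, H u⟫ := quad_lower' hsymmOp h2 u hu_perp
  have hHw : H w = lam1 (x t) • w := hTw1
  have hwHu : ⟪w, H u⟫ = 0 := by
    rw [← hess_symm' hE (x t) w u]
    show ⟪H w, u⟫ = 0
    rw [hHw, real_inner_smul_left, hwu, mul_zero]
  have hreflu : reflect w g = u - a • w := by
    rw [reflect, hu_def]; module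
  have hexp : ⟪g, H (reflect w g)⟫ = ⟪u, H u⟫ - lam1 (x t) * a ^ 2 := by
    have hgu : g = u + a • w := by rw [hu_def]; module
    rw [hreflu, map_sub, map_smul, hHw]
    nth_rewrite 1 [hgu]
    simp only [inner_sub_right, inner_add_left, real_inner_smul_left, real_inner_smul_right,
      hwHu, hww, huw, hwu, mul_zero, mul_one, zero_mul, sub_zero, add_zero]
    ring
  have hpyth : ‖g‖ ^ 2 = ‖u‖ ^ 2 + a ^ 2 := by
    have : ⟪g, g⟫ = ⟪u, u⟫ + a ^ 2 := by
      nth_rewrite 1 [show g = u + a • w by rw [hu_def]; module]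
      nth_rewrite 1 [show g = u + a • w by rw [hu_def]; module]
      simp only [inner_add_left, inner_add_right, real_inner_smul_left, real_inner_smul_right,
        hww, hwu, huw, mul_zero, mul_one, zero_mul, add_zero, zero_add]
      ring
    rwa [real_inner_self_eq_norm_sq, real_inner_self_eq_norm_sq] at this
  have hm1 : min (-(lam1 (x t))) (lam2 (x t)) ≤ -(lam1 (x t)) := min_le_left _ _
  have hm2 : min (-(lam1 (x t))) (lam2 (x t)) ≤ lam2 (x t) := min_le_right _ _
  nlinarith [hquad, hexp, hpyth, sq_nonneg a, sq_nonneg ‖u‖]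
end

section
/- Let E ∈ C³(ℝ^N) and let Ω ⊂ ℝ^N be compact with λ1(x) < 0 < λ2(x) for all x ∈ Ω; set g = min_{x∈Ω} min(−λ1(x), λ2(x)) > 0 and M = max_{x∈Ω} ‖∇²E(x)‖_op. Let (x(t), v(t)) solve the ε-GAD with v(t) a unit vector and x(t) ∈ Ω on some time interval. Then for all t in that interval, d/dt ½‖∇E(x(t))‖² ≤ (−g + 2M ‖v(t) − v1(x(t))‖) ‖∇E(x(t))‖², where v1(x) is the sign choice of the first eigenvector closest to v(t). -/
open Real Filter Set
open scoped Topology RealInnerProductSpace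

/-! Along the flow, `d/dt ½‖∇E‖² = ⟪∇E, H ẋ⟫` with `H = ∇²E` and `ẋ = -(I - 2 v ⊗ v) ∇E`.
Replacing `v` by the eigenvector `w` gives `-⟪∇E, H (I - 2 w ⊗ w) ∇E⟫ ≤ -g ‖∇E‖²`: the reflection
flips the sign of the single negative eigenvalue, so `H (I - 2 w ⊗ w) ≥ g`. The error of the
replacement is `2 ⟪∇E, H (P_v - P_w) ∇E⟫`, and `‖P_v - P_w‖ = √(1 - ⟪v, w⟫²) ≤ ‖v - w‖`. -/

open InnerProductSpace

section RealInnerProductSpace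

variable {F : Type*} [NormedAddCommGroup F] [InnerProductSpace ℝ F]

/-- `toDual` is stated as a conjugate-linear map; over `ℝ`, Mazur–Ulam makes its inverse an
`ℝ`-linear isometry with the same coercion, so that `gradient f = rieszEquiv F ∘ fderiv ℝ f`
holds by `rfl`. -/
noncomputable def rieszEquiv (F : Type*) [NormedAddCommGroup F] [InnerProductSpace ℝ F]
    [CompleteSpace F] : StrongDual ℝ F ≃ₗᵢ[ℝ] F :=
  (toDual ℝ F).symm.toIsometryEquiv.toRealLinearIsometryEquivOfMapZero (by simp)

theorem ContDiffAt.differentiableAt_gradient [CompleteSpace F] {f : F → ℝ} {x : F}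
    (hf : ContDiffAt ℝ 2 f x) : DifferentiableAt ℝ (gradient f) x :=
  ((rieszEquiv F).contDiff.contDiffAt.comp x
    (hf.fderiv_right (m := 1) (by norm_num))).differentiableAt one_ne_zero

theorem norm_sq_inner_smul_sub_inner_smul_le {v w : F} (hv : ‖v‖ = 1) (hw : ‖w‖ = 1) (u : F) :
    ‖⟪v, u⟫ • v - ⟪w, u⟫ • w‖ ^ 2 ≤ (1 - ⟪v, w⟫ ^ 2) * ‖u‖ ^ 2 := by
  have hvv : ⟪v, v⟫ = 1 := by rw [real_inner_self_eq_norm_sq, hv, one_pow]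
  have hww : ⟪w, w⟫ = 1 := by rw [real_inner_self_eq_norm_sq, hw, one_pow]
  set a := ⟪v, u⟫ with ha
  set b := ⟪w, u⟫ with hb
  set c := ⟪v, w⟫ with hc
  clear_value a b c
  set S := ‖a • v - b • w‖ ^ 2
  -- `r = (P_v - P_w)² u`, and `(P_v - P_w)⁴ = (1 - c²) (P_v - P_w)²` gives `hr`
  set r := (a - b * c) • v + (b - a * c) • w
  have hS : S = ⟪u, r⟫ := by
    simp only [S, r, ← real_inner_self_eq_norm_sq, inner_sub_left, inner_sub_right,
      inner_add_right, real_inner_smul_left, real_inner_smul_right, hvv, hww,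
      real_inner_comm v u, real_inner_comm w u, real_inner_comm v w, ← ha, ← hb, ← hc]
    ring
  have hr : ‖r‖ ^ 2 = (1 - c ^ 2) * S := by
    simp only [hS, r, ← real_inner_self_eq_norm_sq, inner_add_left, inner_add_right,
      real_inner_smul_left, real_inner_smul_right, hvv, hww,
      real_inner_comm v u, real_inner_comm w u, real_inner_comm v w, ← ha, ← hb, ← hc]
    ring
  have hCS : S ^ 2 ≤ ‖u‖ ^ 2 * ((1 - c ^ 2) * S) := by
    rw [← hr, ← mul_pow, hS, ← sq_abs]
    exact pow_le_pow_left₀ (abs_nonneg _) (abs_real_inner_le_norm u r) 2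
  have hc1 : c ^ 2 ≤ 1 := by
    simpa [hv, hw, ← hc] using abs_real_inner_le_norm v w
  have hS0 : 0 ≤ S := by positivity
  nlinarith [mul_nonneg (sub_nonneg.2 hc1) (sq_nonneg ‖u‖)]

theorem norm_inner_smul_sub_inner_smul_le {v w : F} (hv : ‖v‖ = 1) (hw : ‖w‖ = 1) (u : F) :
    ‖⟪v, u⟫ • v - ⟪w, u⟫ • w‖ ≤ ‖v - w‖ * ‖u‖ := by
  refine le_of_sq_le_sq ?_ (by positivity)
  have hvw : ‖v - w‖ ^ 2 = 2 - 2 * ⟪v, w⟫ := by rw [norm_sub_sq_real, hv, hw]; ring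
  calc ‖⟪v, u⟫ • v - ⟪w, u⟫ • w‖ ^ 2 ≤ (1 - ⟪v, w⟫ ^ 2) * ‖u‖ ^ 2 :=
        norm_sq_inner_smul_sub_inner_smul_le hv hw u
    _ ≤ (2 - 2 * ⟪v, w⟫) * ‖u‖ ^ 2 := by nlinarith [sq_nonneg (1 - ⟪v, w⟫), sq_nonneg ‖u‖]
    _ = (‖v - w‖ * ‖u‖) ^ 2 := by rw [mul_pow, hvw]

theorem inner_apply_inner_smul_sub_inner_smul_le (H : F →L[ℝ] F) {v w : F} (hv : ‖v‖ = 1)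
    (hw : ‖w‖ = 1) (u : F) : ⟪u, H (⟪v, u⟫ • v - ⟪w, u⟫ • w)⟫ ≤ ‖H‖ * ‖v - w‖ * ‖u‖ ^ 2 :=
  calc ⟪u, H (⟪v, u⟫ • v - ⟪w, u⟫ • w)⟫ ≤ ‖u‖ * (‖H‖ * (‖v - w‖ * ‖u‖)) :=
        (real_inner_le_norm _ _).trans <| mul_le_mul_of_nonneg_left
          ((H.le_opNorm _).trans <| mul_le_mul_of_nonneg_left
            (norm_inner_smul_sub_inner_smul_le hv hw u) (norm_nonneg H)) (norm_nonneg u)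
    _ = ‖H‖ * ‖v - w‖ * ‖u‖ ^ 2 := by ring

theorem Submodule.mem_orthogonal_of_finrank_eq_one {K : Submodule ℝ F}
    (hK : Module.finrank ℝ K = 1) {w y : F} (hwK : w ∈ K) (hw : w ≠ 0) (hwy : ⟪w, y⟫ = 0) :
    y ∈ Kᗮ := by
  intro z hz
  obtain ⟨c, hc⟩ := (finrank_eq_one_iff_of_nonzero' (⟨w, hwK⟩ : K) (by simpa using hw)).1 hK ⟨z, hz⟩
  have hcz : c • w = z := congrArg Subtype.val hc
  rw [← hcz, real_inner_smul_left, hwy, mul_zero]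

theorem LinearMap.IsSymmetric.mul_norm_sq_le_inner_apply_self [FiniteDimensional ℝ F]
    {T : Module.End ℝ F} (hT : T.IsSymmetric) {lam₁ lam₂ : ℝ}
    (hgap : ∀ μ, T.HasEigenvalue μ → μ = lam₁ ∨ lam₂ ≤ μ) {y : F}
    (hy : y ∈ (T.eigenspace lam₁)ᗮ) : lam₂ * ‖y‖ ^ 2 ≤ ⟪y, T y⟫ := by
  set b := hT.eigenvectorBasis (n := Module.finrank ℝ F) rfl
  set μ := hT.eigenvalues (n := Module.finrank ℝ F) rfl
  have hb : ∀ i, T (b i) = μ i • b i := hT.apply_eigenvectorBasis rfl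
  have hμ : ∀ i, T.HasEigenvalue (μ i) := hT.hasEigenvalue_eigenvalues rfl
  clear_value b μ
  have hTy : ⟪y, T y⟫ = ∑ i, μ i * ⟪y, b i⟫ ^ 2 := by
    rw [← b.sum_inner_mul_inner y (T y)]
    refine Finset.sum_congr rfl fun i _ => ?_
    rw [← hT, hb, real_inner_smul_left, real_inner_comm (b i) y]
    ring
  have hy2 : ‖y‖ ^ 2 = ∑ i, ⟪y, b i⟫ ^ 2 := by
    rw [← real_inner_self_eq_norm_sq, ← b.sum_inner_mul_inner y y]
    refine Finset.sum_congr rfl fun i _ => ?_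
    rw [real_inner_comm (b i) y, sq]
  rw [hTy, hy2, Finset.mul_sum]
  refine Finset.sum_le_sum fun i _ => ?_
  rcases hgap (μ i) (hμ i) with hi | hi
  · have hbi : b i ∈ T.eigenspace lam₁ := Module.End.mem_eigenspace_iff.2 (hi ▸ hb i)
    simp [Submodule.inner_left_of_mem_orthogonal hbi hy]
  · exact mul_le_mul_of_nonneg_right hi (sq_nonneg _)

end RealInnerProductSpace

section Hessian

variable {N : ℕ}

theorem inner_hessCLM_apply (E : Vec N → ℝ) (x z y : Vec N) :
    ⟪hessCLM E x z, y⟫ = fderiv ℝ (fderiv ℝ E) x z y := by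
  have : hessCLM E x = ((rieszEquiv (Vec N) : _ →L[ℝ] _)).comp (fderiv ℝ (fderiv ℝ E) x) :=
    (rieszEquiv (Vec N)).comp_fderiv
  rw [this]
  exact toDual_symm_apply

theorem hessOp_isSymmetric {E : Vec N → ℝ} {x : Vec N} (hE : ContDiffAt ℝ 2 E x) :
    (hessOp E x).IsSymmetric := fun z y => by
  change ⟪hessCLM E x z, y⟫ = ⟪z, hessCLM E x y⟫
  rw [real_inner_comm _ z, inner_hessCLM_apply, inner_hessCLM_apply,
    hE.isSymmSndFDerivAt (by simp) z y]

theorem hasDerivAt_half_norm_sq_gradient_comp {E : Vec N → ℝ} {x : ℝ → Vec N} {x' : Vec N}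
    {t : ℝ} (hE : DifferentiableAt ℝ (gradient E) (x t)) (hx : HasDerivAt x x' t) :
    HasDerivAt (fun τ => (1 / 2 : ℝ) * ‖gradient E (x τ)‖ ^ 2)
      ⟪gradient E (x t), hessCLM E (x t) x'⟫ t := by
  refine (((hE.hasFDerivAt.comp_hasDerivAt t hx).norm_sq).const_mul (1 / 2 : ℝ)).congr_deriv ?_
  rw [hessCLM, Function.comp_apply]
  ring

theorem neg_reflect_eq (v w u : Vec N) :
    -reflect v u = -reflect w u + (2 : ℝ) • (⟪v, u⟫ • v - ⟪w, u⟫ • w) := by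
  simp only [reflect]
  module

theorem mul_norm_sq_le_inner_apply_reflect {T : Module.End ℝ (Vec N)} (hT : T.IsSymmetric)
    {w : Vec N} (hw : ‖w‖ = 1) {lam g : ℝ} (hTw : T w = lam • w) (hlam : lam ≤ -g)
    (hperp : ∀ y, ⟪w, y⟫ = 0 → g * ‖y‖ ^ 2 ≤ ⟪y, T y⟫) (u : Vec N) :
    g * ‖u‖ ^ 2 ≤ ⟪u, T (reflect w u)⟫ := by
  set b := ⟪w, u⟫
  set y := u - b • w
  have hww : ⟪w, w⟫ = 1 := by rw [real_inner_self_eq_norm_sq, hw, one_pow]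
  have hwy : ⟪w, y⟫ = 0 := by rw [inner_sub_right, real_inner_smul_right, hww, mul_one, sub_self]
  have hwTy : ⟪w, T y⟫ = 0 := by rw [← hT, hTw, real_inner_smul_left, hwy, mul_zero]
  have hu : u = y + b • w := by simp [y]
  have hnorm : ‖u‖ ^ 2 = ‖y‖ ^ 2 + b ^ 2 := by
    rw [hu, norm_add_sq_real, real_inner_smul_right, real_inner_comm w y, hwy, norm_smul, hw]
    simp
  have hval : ⟪u, T (reflect w u)⟫ = ⟪y, T y⟫ - lam * b ^ 2 := by
    have hreflect : reflect w u = y - b • w := by simp only [reflect, y]; module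
    rw [hreflect, hu, map_sub, map_smul, hTw]
    simp only [inner_add_left, inner_sub_right, real_inner_smul_left, real_inner_smul_right,
      real_inner_comm w y, hwy, hwTy, hww]
    ring
  rw [hnorm, hval]
  linarith [hperp y hwy, mul_le_mul_of_nonneg_right hlam (sq_nonneg b)]

end Hessian

theorem stmt4_general {N : ℕ} (E : Vec N → ℝ) (hE : ContDiff ℝ 3 E)
    (Ω : Set (Vec N))
    (lam1 lam2 : Vec N → ℝ)
    (heig : ∀ x ∈ Ω, TwoSmallestEigen (hessOp E x) (lam1 x) (lam2 x) ∧
      lam1 x < 0 ∧ 0 < lam2 x)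
    (g M : ℝ)
    (hgmin : ∀ x ∈ Ω, g ≤ min (-(lam1 x)) (lam2 x))
    (hM : ∀ x ∈ Ω, ‖hessCLM E x‖ ≤ M)
    (ε : ℝ) (s : Set ℝ)
    (x v : ℝ → Vec N) (hsol : IsGADSolOn E ε x v s) (hxΩ : ∀ t ∈ s, x t ∈ Ω) :
    ∀ t ∈ s, ∀ w : Vec N, IsMinEigvec (hessOp E (x t)) w → 0 ≤ ⟪v t, w⟫ →
      ∃ d : ℝ, HasDerivAt (fun τ => (1/2 : ℝ) * ‖gradient E (x τ)‖ ^ 2) d t ∧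
        d ≤ (-g + 2 * M * ‖v t - w‖) * ‖gradient E (x t)‖ ^ 2 := by
  intro t ht w ⟨hw, lam, ⟨hlam, hlam_min⟩, hHw⟩ _
  obtain ⟨hv, hx', -⟩ := hsol t ht
  obtain ⟨⟨hlam1, -, -, hlam1_min, hgap, hrank⟩, hlam1_neg, hlam2_pos⟩ := heig (x t) (hxΩ t ht)
  obtain ⟨hg1, hg2⟩ := le_min_iff.1 (hgmin (x t) (hxΩ t ht))
  have hC2 : ContDiffAt ℝ 2 E (x t) := hE.contDiffAt.of_le (by norm_num)
  have hsymm := hessOp_isSymmetric hC2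
  obtain rfl : lam = lam1 (x t) := le_antisymm (hlam_min _ hlam1) (hlam1_min _ hlam)
  set u := gradient E (x t)
  refine ⟨_, hasDerivAt_half_norm_sq_gradient_comp hC2.differentiableAt_gradient hx', ?_⟩
  have hcoer : g * ‖u‖ ^ 2 ≤ ⟪u, hessOp E (x t) (reflect w u)⟫ := by
    refine mul_norm_sq_le_inner_apply_reflect hsymm hw hHw (by linarith) (fun y hwy => ?_) u
    have hy := hsymm.mul_norm_sq_le_inner_apply_self hgap <|
      Submodule.mem_orthogonal_of_finrank_eq_one (hrank (hlam1_neg.trans hlam2_pos))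
        (Module.End.mem_eigenspace_iff.2 hHw) (by rintro rfl; simp at hw) hwy
    exact (mul_le_mul_of_nonneg_right hg2 (sq_nonneg _)).trans hy
  have hproj := inner_apply_inner_smul_sub_inner_smul_le (hessCLM E (x t)) hv hw u
  have hM' : ‖hessCLM E (x t)‖ * ‖v t - w‖ * ‖u‖ ^ 2 ≤ M * ‖v t - w‖ * ‖u‖ ^ 2 := by
    gcongr; exact hM _ (hxΩ t ht)
  rw [neg_reflect_eq (v t) w u, map_add, map_neg, map_smul, inner_add_right, inner_neg_right,
    real_inner_smul_right]
  change -⟪u, hessOp E (x t) (reflect w u)⟫ + 2 * _ ≤ _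
  linarith

/-- Along a GAD trajectory in a compact index-1 region `Ω`, with
`g = min_Ω min(-λ1, λ2)` and `M = max_Ω ‖∇²E‖_op`, one has
`d/dt ½‖∇E(x)‖² ≤ (-g + 2M ‖v - v1(x)‖) ‖∇E(x)‖²` for the sign of `v1(x)` closest to `v`. -/
theorem stmt4 {N : ℕ} (E : Vec N → ℝ) (hE : ContDiff ℝ 3 E)
    (Ω : Set (Vec N)) (hΩc : IsCompact Ω) (hΩne : Ω.Nonempty)
    (lam1 lam2 : Vec N → ℝ)
    (heig : ∀ x ∈ Ω, TwoSmallestEigen (hessOp E x) (lam1 x) (lam2 x) ∧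
      lam1 x < 0 ∧ 0 < lam2 x)
    (g M : ℝ) (hg : 0 < g)
    (hgmin : ∀ x ∈ Ω, g ≤ min (-(lam1 x)) (lam2 x))
    (hM : ∀ x ∈ Ω, ‖hessCLM E x‖ ≤ M)
    (ε : ℝ) (hε : 0 < ε) (s : Set ℝ) (hs : IsOpen s)
    (x v : ℝ → Vec N) (hsol : IsGADSolOn E ε x v s) (hxΩ : ∀ t ∈ s, x t ∈ Ω) :
    ∀ t ∈ s, ∀ w : Vec N, IsMinEigvec (hessOp E (x t)) w → 0 ≤ ⟪v t, w⟫ →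
      ∃ d : ℝ, HasDerivAt (fun τ => (1/2 : ℝ) * ‖gradient E (x τ)‖ ^ 2) d t ∧
        d ≤ (-g + 2 * M * ‖v t - w‖) * ‖gradient E (x t)‖ ^ 2 :=
  stmt4_general E hE Ω lam1 lam2 heig g M hgmin hM ε s x v hsol hxΩ
end

section
/- Let α ∈ ℝ with cos α > 0, and consider the planar system ṙ = cos(ω − α), ω̇ = 2 r sin ω − (1/r) sin(ω − α) on r > 0 (with ω taken modulo 2π). Its fixed points are exactly (r0, ω0^+) and (r0, ω0^−), where r0 = 1/√(2 cos α) and ω0^± = α ± π/2, and the Jacobian of the system at (r0, ω0^±) equals J^± = [[0, ∓1], [±4 cos α, ∓ 2 sin α / √(2 cos α)]]. -/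
open Real

/-!
On `cos (ω - α) = 0` we have `s := sin (ω - α) = ±1` and `sin ω = s cos α`, so the second equation
factors as `s (2 r cos α - r⁻¹) = 0`, which pins `r` to `1 / √(2 cos α)`. At the fixed points
`ω = α + σ π/2` with `σ = ±1` the partial derivatives reduce to `sin (ω - α) = σ`,
`sin ω = σ cos α`, `cos ω = -σ sin α` and `r0⁻² = 2 cos α`.
-/

noncomputable def gadField (α : ℝ) (p : ℝ × ℝ) : ℝ × ℝ :=
  (cos (p.2 - α), 2 * p.1 * sin p.2 - p.1⁻¹ * sin (p.2 - α))

lemma cos_sub_eq_zero_iff (x a : ℝ) :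
    cos (x - a) = 0 ↔ ∃ k : ℤ, x = a + π / 2 + 2 * π * k ∨ x = a - π / 2 + 2 * π * k := by
  rw [cos_eq_zero_iff_sin_eq, sin_eq_one_iff, sin_eq_neg_one_iff]
  constructor
  · rintro (⟨k, hk⟩ | ⟨k, hk⟩)
    · exact ⟨k, Or.inl (by linarith)⟩
    · exact ⟨k, Or.inr (by linarith)⟩
  · rintro ⟨k, hk | hk⟩
    · exact Or.inl ⟨k, by linarith⟩
    · exact Or.inr ⟨k, by linarith⟩

lemma two_mul_mul_eq_inv_iff {r c : ℝ} (hr : 0 < r) (hc : 0 < c) :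
    2 * r * c = r⁻¹ ↔ r = 1 / √(2 * c) := by
  have h2c : 0 < 2 * c := by positivity
  rw [eq_div_iff (sqrt_pos.2 h2c).ne', ← pow_left_inj₀ (by positivity) zero_le_one two_ne_zero,
    mul_pow, sq_sqrt h2c.le, one_pow]
  have hrr : r * r⁻¹ = 1 := mul_inv_cancel₀ hr.ne'
  constructor <;> intro h
  · linear_combination r * h + hrr
  · linear_combination r⁻¹ * h - 2 * r * c * hrr

lemma gadField_eq_zero_iff (α r ω : ℝ) :
    gadField α (r, ω) = (0, 0) ↔ 2 * r * cos α = r⁻¹ ∧ cos (ω - α) = 0 := by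
  simp only [gadField, Prod.mk.injEq]
  rw [and_comm]
  refine and_congr_left fun hcos => ?_
  have hsin : sin ω = sin (ω - α) * cos α := by
    conv_lhs => rw [← sub_add_cancel ω α]
    rw [sin_add, hcos, zero_mul, add_zero]
  have hs : sin (ω - α) ≠ 0 := fun h => by
    simpa [h, hcos] using sin_sq_add_cos_sq (ω - α)
  rw [hsin, ← sub_eq_zero (a := 2 * r * cos α),
    show 2 * r * (sin (ω - α) * cos α) - r⁻¹ * sin (ω - α)
      = sin (ω - α) * (2 * r * cos α - r⁻¹) by ring]
  exact mul_eq_zero_iff_left hs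

lemma hasFDerivAt_gadField (α : ℝ) {r : ℝ} (hr : r ≠ 0) (ω : ℝ) :
    HasFDerivAt (gadField α)
      (((-sin (ω - α)) • ContinuousLinearMap.snd ℝ ℝ ℝ).prod
        ((2 * sin ω + (r ^ 2)⁻¹ * sin (ω - α)) • ContinuousLinearMap.fst ℝ ℝ ℝ
          + (2 * r * cos ω - r⁻¹ * cos (ω - α)) • ContinuousLinearMap.snd ℝ ℝ ℝ)) (r, ω) := by
  have hfst : HasFDerivAt (fun p : ℝ × ℝ => p.1) (ContinuousLinearMap.fst ℝ ℝ ℝ) (r, ω) :=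
    hasFDerivAt_fst
  have hsub : HasFDerivAt (fun p : ℝ × ℝ => p.2 - α) (ContinuousLinearMap.snd ℝ ℝ ℝ) (r, ω) :=
    hasFDerivAt_snd.sub_const α
  have hF := ((hasDerivAt_cos _).comp_hasFDerivAt _ hsub).prodMk
    ((hfst.const_mul 2).mul ((hasDerivAt_sin ω).comp_hasFDerivAt _ hasFDerivAt_snd) |>.sub
      (((hasDerivAt_inv hr).comp_hasFDerivAt _ hfst).mul
        ((hasDerivAt_sin _).comp_hasFDerivAt _ hsub)))
  exact hF.congr_fderiv (by ext <;> simp [mul_comm])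

lemma sin_sign_mul_pi_div_two {σ : ℝ} (hσ : σ = 1 ∨ σ = -1) : sin (σ * (π / 2)) = σ := by
  rcases hσ with rfl | rfl <;> simp

lemma cos_sign_mul_pi_div_two {σ : ℝ} (hσ : σ = 1 ∨ σ = -1) : cos (σ * (π / 2)) = 0 := by
  rcases hσ with rfl | rfl <;> simp

/-- For `cos α > 0`, the planar system
`ṙ = cos(ω - α)`, `ω̇ = 2r sin ω - (1/r) sin(ω - α)` on `r > 0` has fixed points exactly
at `(r0, ω0^±)` with `r0 = 1/√(2 cos α)`, `ω0^± = α ± π/2` (mod 2π), and its Jacobian at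
`(r0, ω0^±)` is `J^± = [[0, ∓1], [±4 cos α, ∓ 2 sin α / √(2 cos α)]]`. -/
theorem stmt16 (α : ℝ) (hα : 0 < Real.cos α)
    (f : ℝ × ℝ → ℝ × ℝ)
    (hf : f = fun p => (Real.cos (p.2 - α),
      2 * p.1 * Real.sin p.2 - (p.1)⁻¹ * Real.sin (p.2 - α)))
    (r0 : ℝ) (hr0 : r0 = 1 / Real.sqrt (2 * Real.cos α)) :
    -- the fixed points of the system on `{r > 0}` are exactly `(r0, α ± π/2)` mod `2π`
    (∀ r ω : ℝ, 0 < r →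
      (f (r, ω) = (0, 0) ↔ (r = r0 ∧ ∃ k : ℤ,
        ω = α + π / 2 + 2 * π * k ∨ ω = α - π / 2 + 2 * π * k))) ∧
    -- the Jacobian at `(r0, ω0^±)` is `J^±` (`σ = ±1` selects the sign)
    (∀ σ : ℝ, σ = 1 ∨ σ = -1 →
      ∃ L : ℝ × ℝ →L[ℝ] ℝ × ℝ,
        HasFDerivAt f L (r0, α + σ * (π / 2)) ∧
        ∀ p : ℝ × ℝ, L p = (-σ * p.2,
          σ * 4 * Real.cos α * p.1
            - σ * (2 * Real.sin α / Real.sqrt (2 * Real.cos α)) * p.2)) := by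
  have hfield : f = gadField α := hf
  subst hfield
  refine ⟨fun r ω hr => ?_, fun σ hσ => ?_⟩
  · rw [gadField_eq_zero_iff, two_mul_mul_eq_inv_iff hr hα, cos_sub_eq_zero_iff, hr0]
  · have hr0pos : 0 < r0 := by rw [hr0]; positivity
    have hr0sq : (r0 ^ 2)⁻¹ = 2 * cos α := by
      rw [hr0, one_div, inv_pow, inv_inv, sq_sqrt (by positivity)]
    refine ⟨_, hasFDerivAt_gadField α hr0pos.ne' _, fun p => ?_⟩
    simp only [ContinuousLinearMap.prod_apply, add_apply, smul_apply,
      ContinuousLinearMap.coe_fst', ContinuousLinearMap.coe_snd',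
      smul_eq_mul, add_sub_cancel_left, sin_add, cos_add, sin_sign_mul_pi_div_two hσ,
      cos_sign_mul_pi_div_two hσ, hr0sq]
    rw [hr0]
    ext <;> ring
end
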